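/- arXiv:0909.1229 — 3 statements merged into one kernel-verified Lean document; each statement's English description precedes it below -/
import Mathlib

section
/- Let l ∈ ℕ with l ≥ 1. There exists C > 0 depending only on l such that for all collision variables (v, v_*, σ) with deviation angle θ ∈ [0, π/2], one has |W_l(v) − W_l(v')| ≤ C sin(θ/2) · ( W_l(v') + W_{l-1}(v') W_1(v'_*) + sin^{l-1}(θ/2) W_l(v'_*) ). -/
/-!
Writing `s = sin (θ/2)`, the collision geometry gives `|v - v'| = s |v - v_*|` and
`|v - v_*| = |v' - v'_*| ≤ |v'| + |v'_*|`, so `||v| - |v'|| ≤ s (|v'| + |v'_*|)`; since the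
Japanese bracket `⟨x⟩ = √(1 + x²)` is 1-Lipschitz, the same bound holds for `A = ⟨v⟩`, `B = ⟨v'⟩`
in terms of `B` and `C = ⟨v'_*⟩`. Then `|A^l - B^l| ≤ l max(A, B)^(l-1) |A - B|` with
`max(A, B) ≤ 2B + sC`, and expanding `(2B + sC)^(l-1) (B + C)` produces the three terms of the
estimate, the cross term `s^(l-1) B C^(l-1)` being absorbed by `B^l + s^(l-1) C^l`.
-/

open Real

section PowerBounds

variable {α : Type*} [CommRing α] [LinearOrder α] [IsStrictOrderedRing α] {a b c s : α}

lemma mul_pow_le_pow_succ_add_pow_succ (hb : 0 ≤ b) (hc : 0 ≤ c) (n : ℕ) :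
    b * c ^ n ≤ b ^ (n + 1) + c ^ (n + 1) := by
  rcases le_total b c with h | h
  · calc b * c ^ n ≤ c * c ^ n := by gcongr
      _ ≤ b ^ (n + 1) + c ^ (n + 1) := by
          rw [← pow_succ']; exact le_add_of_nonneg_left (by positivity)
  · calc b * c ^ n ≤ b * b ^ n := by gcongr
      _ ≤ b ^ (n + 1) + c ^ (n + 1) := by
          rw [← pow_succ']; exact le_add_of_nonneg_right (by positivity)

lemma add_mul_pow_add_pow_le (hb : 0 ≤ b) (hc : 0 ≤ c) (hs : 0 ≤ s) (hs1 : s ≤ 1)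
    (n : ℕ) :
    (b + c) * (b ^ n + s ^ n * c ^ n) ≤ 2 * (b ^ (n + 1) + b ^ n * c + s ^ n * c ^ (n + 1)) := by
  have hsn : s ^ n ≤ 1 := pow_le_one₀ hs hs1
  have hcross : s ^ n * (b * c ^ n) ≤ b ^ (n + 1) + s ^ n * c ^ (n + 1) :=
    calc s ^ n * (b * c ^ n) ≤ s ^ n * (b ^ (n + 1) + c ^ (n + 1)) := by
          gcongr; exact mul_pow_le_pow_succ_add_pow_succ hb hc n
      _ ≤ b ^ (n + 1) + s ^ n * c ^ (n + 1) := by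
          rw [mul_add]; gcongr; exact mul_le_of_le_one_left (by positivity) hsn
  calc (b + c) * (b ^ n + s ^ n * c ^ n)
      = b ^ (n + 1) + b ^ n * c + s ^ n * (b * c ^ n) + s ^ n * c ^ (n + 1) := by ring
    _ ≤ 2 * (b ^ (n + 1) + b ^ n * c + s ^ n * c ^ (n + 1)) := by
        linear_combination hcross + (by positivity : 0 ≤ b ^ n * c)

lemma two_mul_add_mul_pow_le (hb : 0 ≤ b) (hc : 0 ≤ c) (hs : 0 ≤ s) (n : ℕ) :
    (2 * b + s * c) ^ n ≤ 4 ^ n * (b ^ n + s ^ n * c ^ n) := by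
  calc (2 * b + s * c) ^ n ≤ (2 * (b + s * c)) ^ n := by gcongr; nlinarith [mul_nonneg hs hc]
    _ = 2 ^ n * (b + s * c) ^ n := mul_pow _ _ _
    _ ≤ 2 ^ n * (2 ^ n * (b ^ n + s ^ n * c ^ n)) := by
        gcongr
        calc (b + s * c) ^ n ≤ 2 ^ (n - 1) * (b ^ n + (s * c) ^ n) :=
              add_pow_le hb (by positivity) n
          _ ≤ 2 ^ n * (b ^ n + s ^ n * c ^ n) := by
              rw [mul_pow]; gcongr
              · exact one_le_two
              · exact n.sub_le 1
    _ = 4 ^ n * (b ^ n + s ^ n * c ^ n) := by rw [← mul_assoc, ← mul_pow]; norm_num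

lemma abs_pow_succ_sub_pow_succ_le (ha : 0 ≤ a) (hb : 0 ≤ b) (hc : 0 ≤ c) (hs : 0 ≤ s)
    (hs1 : s ≤ 1) (hab : |a - b| ≤ s * (b + c)) (n : ℕ) :
    |a ^ (n + 1) - b ^ (n + 1)| ≤
      2 * (n + 1) * 4 ^ n * s * (b ^ (n + 1) + b ^ n * c + s ^ n * c ^ (n + 1)) := by
  have hmax : max |a| |b| ≤ 2 * b + s * c := by
    rw [abs_of_nonneg ha, abs_of_nonneg hb]
    have : s * b ≤ b := mul_le_of_le_one_left hb hs1
    refine max_le ?_ (by nlinarith [mul_nonneg hs hc])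
    linarith [le_abs_self (a - b)]
  calc |a ^ (n + 1) - b ^ (n + 1)| ≤ |a - b| * (n + 1) * max |a| |b| ^ n := by
        simpa using abs_pow_sub_pow_le a b (n + 1)
    _ ≤ s * (b + c) * (n + 1) * (4 ^ n * (b ^ n + s ^ n * c ^ n)) := by
        gcongr
        exact (pow_le_pow_left₀ (le_max_of_le_left (abs_nonneg a)) hmax n).trans
          (two_mul_add_mul_pow_le hb hc hs n)
    _ = (n + 1) * 4 ^ n * s * ((b + c) * (b ^ n + s ^ n * c ^ n)) := by ring
    _ ≤ (n + 1) * 4 ^ n * s * (2 * (b ^ (n + 1) + b ^ n * c + s ^ n * c ^ (n + 1))) :=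
        mul_le_mul_of_nonneg_left (add_mul_pow_add_pow_le hb hc hs hs1 n) (by positivity)
    _ = _ := by ring

end PowerBounds

-- `W_m(u) = japaneseBracket ‖u‖ ^ m`.
noncomputable def japaneseBracket (x : ℝ) : ℝ := √(1 + x ^ 2)

lemma one_add_sq_rpow_div_two (x : ℝ) (m : ℕ) :
    (1 + x ^ 2) ^ ((m : ℝ) / 2) = japaneseBracket x ^ m := by
  rw [japaneseBracket, sqrt_eq_rpow, ← rpow_mul_natCast (by positivity)]
  ring_nf

lemma one_add_sq_rpow_one_div_two (x : ℝ) : (1 + x ^ 2) ^ ((1 : ℝ) / 2) = japaneseBracket x := by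
  simpa using one_add_sq_rpow_div_two x 1

lemma sq_japaneseBracket (x : ℝ) : japaneseBracket x ^ 2 = 1 + x ^ 2 :=
  sq_sqrt (by positivity)

lemma one_le_japaneseBracket (x : ℝ) : 1 ≤ japaneseBracket x :=
  one_le_sqrt.mpr (by linarith [sq_nonneg x])

lemma japaneseBracket_nonneg (x : ℝ) : 0 ≤ japaneseBracket x :=
  sqrt_nonneg _

lemma abs_le_japaneseBracket (x : ℝ) : |x| ≤ japaneseBracket x :=
  abs_le_sqrt (by linarith)

lemma le_japaneseBracket (x : ℝ) : x ≤ japaneseBracket x :=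
  (le_abs_self x).trans (abs_le_japaneseBracket x)

lemma abs_japaneseBracket_sub_le (x y : ℝ) :
    |japaneseBracket x - japaneseBracket y| ≤ |x - y| := by
  set X := japaneseBracket x
  set Y := japaneseBracket y
  have hpos : 0 < X + Y := by linarith [one_le_japaneseBracket x, one_le_japaneseBracket y]
  refine le_of_mul_le_mul_right ?_ hpos
  calc |X - Y| * (X + Y) = |X ^ 2 - Y ^ 2| := by
        rw [sq_sub_sq, abs_mul, abs_of_pos hpos, mul_comm]
    _ = |x + y| * |x - y| := by
        rw [sq_japaneseBracket, sq_japaneseBracket, ← abs_mul, ← sq_sub_sq]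
        ring_nf
    _ ≤ (|x| + |y|) * |x - y| := by gcongr; exact abs_add_le x y
    _ ≤ |x - y| * (X + Y) := by
        rw [mul_comm]; gcongr <;> exact abs_le_japaneseBracket _

section Collision

variable {E : Type*} [NormedAddCommGroup E] [InnerProductSpace ℝ E] {v vs σ : E} {θ : ℝ}

noncomputable def postCollisionalVelocity (v vs σ : E) : E :=
  (1 / 2 : ℝ) • (v + vs) + (‖v - vs‖ / 2) • σ

noncomputable def postCollisionalVelocityStar (v vs σ : E) : E :=
  (1 / 2 : ℝ) • (v + vs) - (‖v - vs‖ / 2) • σ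

lemma inner_sub_eq_norm_mul_cos (hcos : cos θ = inner ℝ (‖v - vs‖⁻¹ • (v - vs)) σ) :
    inner ℝ (v - vs) σ = ‖v - vs‖ * cos θ := by
  rcases eq_or_ne v vs with rfl | hne
  · simp
  · rw [hcos, real_inner_smul_left,
      mul_inv_cancel_left₀ (norm_ne_zero_iff.mpr (sub_ne_zero.mpr hne))]

lemma norm_sub_postCollisionalVelocity (hσ : ‖σ‖ = 1)
    (hcos : cos θ = inner ℝ (‖v - vs‖⁻¹ • (v - vs)) σ) :
    ‖v - postCollisionalVelocity v vs σ‖ = ‖v - vs‖ * |sin (θ / 2)| := by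
  have hdiff :
      v - postCollisionalVelocity v vs σ = (1 / 2 : ℝ) • (v - vs) - (‖v - vs‖ / 2) • σ := by
    rw [postCollisionalVelocity]; module
  have hcos_half : cos θ = 1 - 2 * sin (θ / 2) ^ 2 := by
    rw [← cos_two_mul_eq_one_sub, mul_div_cancel₀ θ two_ne_zero]
  rw [← sq_eq_sq₀ (norm_nonneg _) (by positivity), hdiff, norm_sub_sq_real, norm_smul,
    norm_smul, real_inner_smul_left, real_inner_smul_right, inner_sub_eq_norm_mul_cos hcos, hσ,
    hcos_half, mul_pow _ |_|, sq_abs, norm_of_nonneg (by norm_num : (0:ℝ) ≤ 1 / 2),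
    norm_of_nonneg (by positivity : 0 ≤ ‖v - vs‖ / 2)]
  ring

lemma postCollisionalVelocity_sub_postCollisionalVelocityStar (v vs σ : E) :
    postCollisionalVelocity v vs σ - postCollisionalVelocityStar v vs σ = ‖v - vs‖ • σ := by
  rw [postCollisionalVelocity, postCollisionalVelocityStar]; module

lemma norm_sub_le_norm_postCollisionalVelocity_add (hσ : ‖σ‖ = 1) :
    ‖v - vs‖ ≤ ‖postCollisionalVelocity v vs σ‖ + ‖postCollisionalVelocityStar v vs σ‖ := by
  calc ‖v - vs‖ = ‖postCollisionalVelocity v vs σ - postCollisionalVelocityStar v vs σ‖ := by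
        rw [postCollisionalVelocity_sub_postCollisionalVelocityStar, norm_smul, hσ, norm_norm,
          mul_one]
    _ ≤ _ := norm_sub_le _ _

lemma abs_norm_sub_norm_postCollisionalVelocity_le (hσ : ‖σ‖ = 1)
    (hcos : cos θ = inner ℝ (‖v - vs‖⁻¹ • (v - vs)) σ) :
    |‖v‖ - ‖postCollisionalVelocity v vs σ‖| ≤
      |sin (θ / 2)| * (‖postCollisionalVelocity v vs σ‖ + ‖postCollisionalVelocityStar v vs σ‖) :=
  calc |‖v‖ - ‖postCollisionalVelocity v vs σ‖| ≤ ‖v - postCollisionalVelocity v vs σ‖ :=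
        abs_norm_sub_norm_le _ _
    _ = |sin (θ / 2)| * ‖v - vs‖ := by rw [norm_sub_postCollisionalVelocity hσ hcos, mul_comm]
    _ ≤ _ := by gcongr; exact norm_sub_le_norm_postCollisionalVelocity_add hσ

end Collision

/-- Refined weight difference estimate
`|W_l - W'_l| ≤ C sin(θ/2)(W'_l + W'_{l-1} W'_{1,*} + sin^{l-1}(θ/2) W'_{l,*})`. -/
theorem weight_difference_estimate_refined (l : ℕ) (hl : 1 ≤ l) :
    ∃ C > (0:ℝ), ∀ (v vs σ : EuclideanSpace ℝ (Fin 3)), ‖σ‖ = 1 → v ≠ vs →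
      ∀ θ ∈ Set.Icc (0:ℝ) (π/2),
      Real.cos θ = (inner ℝ (‖v - vs‖⁻¹ • (v - vs)) σ : ℝ) →
      ∀ (v' v's : EuclideanSpace ℝ (Fin 3)),
      v' = (1/2 : ℝ) • (v + vs) + (‖v - vs‖ / 2) • σ →
      v's = (1/2 : ℝ) • (v + vs) - (‖v - vs‖ / 2) • σ →
      |(1 + ‖v‖ ^ 2) ^ ((l:ℝ)/2) - (1 + ‖v'‖ ^ 2) ^ ((l:ℝ)/2)| ≤
        C * Real.sin (θ/2) *
          ((1 + ‖v'‖ ^ 2) ^ ((l:ℝ)/2)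
            + (1 + ‖v'‖ ^ 2) ^ (((l:ℝ)-1)/2) * (1 + ‖v's‖ ^ 2) ^ ((1:ℝ)/2)
            + Real.sin (θ/2) ^ (l - 1) * (1 + ‖v's‖ ^ 2) ^ ((l:ℝ)/2)) := by
  obtain ⟨n, rfl⟩ : ∃ n, l = n + 1 := ⟨l - 1, by omega⟩
  refine ⟨2 * (n + 1) * 4 ^ n, by positivity, ?_⟩
  rintro v vs σ hσ - θ ⟨hθ₀, hθ⟩ hcos v' v's hv' hv's
  obtain rfl : v' = postCollisionalVelocity v vs σ := hv'
  obtain rfl : v's = postCollisionalVelocityStar v vs σ := hv's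
  have hsin : 0 ≤ sin (θ / 2) :=
    sin_nonneg_of_nonneg_of_le_pi (by linarith) (by linarith [pi_pos])
  have hspeed := abs_norm_sub_norm_postCollisionalVelocity_le hσ hcos
  rw [abs_of_nonneg hsin] at hspeed
  have hbracket : |japaneseBracket ‖v‖ - japaneseBracket ‖postCollisionalVelocity v vs σ‖| ≤
      sin (θ / 2) * (japaneseBracket ‖postCollisionalVelocity v vs σ‖ +
        japaneseBracket ‖postCollisionalVelocityStar v vs σ‖) :=
    (abs_japaneseBracket_sub_le _ _).trans
      (hspeed.trans (by gcongr <;> exact le_japaneseBracket _))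
  have hexp : ((n + 1 : ℕ) : ℝ) - 1 = (n : ℕ) := by push_cast; ring
  rw [hexp, Nat.add_sub_cancel, one_add_sq_rpow_one_div_two]
  simp only [one_add_sq_rpow_div_two]
  exact_mod_cast abs_pow_succ_sub_pow_succ_le (japaneseBracket_nonneg _)
    (japaneseBracket_nonneg _) (japaneseBracket_nonneg _) hsin (sin_le_one _) hbracket n
end

section
/- For fixed v_* ∈ ℝ³, σ ∈ S² and τ ∈ [0,1], consider the map v ↦ z = ((1+τ)/2) v + ((1−τ)/2)(|v−v_*|σ + v_*) on ℝ³ \ {v_*}. Its Jacobian determinant equals ((1+τ)³/8) · |2τ/(1+τ) + 2((1−τ)/(1+τ)) cos²(θ/2)|, where cos θ = ((v−v_*)/|v−v_*|)·σ; in particular, if θ ∈ [0, π/2], this Jacobian is bounded below by 1/8, uniformly in v_*, σ, τ. -/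
/-! The differential of `w ↦ a • w + b • (‖w - v_*‖ • σ + v_*)` at `v` is `a • I + b • σ uᵀ` with
`u = (v - v_*)/‖v - v_*‖`, a rank-one perturbation of a multiple of the identity. The matrix
determinant lemma gives the Jacobian `a² (a + b cos θ)` with `a = (1+τ)/2`, `b = (1-τ)/2`; this is
the stated expression because `2 cos²(θ/2) = 1 + cos θ`, and it is at least `a³ ≥ 1/8` once
`cos θ ≥ 0`. -/

open Real

theorem LinearMap.det_id_add_smulRight {R M : Type*} [CommRing R] [AddCommGroup M] [Module R M]
    [Module.Free R M] [Module.Finite R M] (f : Module.Dual R M) (w : M) :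
    LinearMap.det (LinearMap.id + f.smulRight w) = 1 + f w := by
  classical
  let b := Module.Free.chooseBasis R M
  have hM : LinearMap.toMatrix b b (LinearMap.id + f.smulRight w) =
      1 + Matrix.replicateCol (Fin 1) (b.repr w) * Matrix.replicateRow (Fin 1) (f ∘ b) := by
    ext i j
    simp [LinearMap.toMatrix_apply, Matrix.one_apply, Finsupp.single_apply, Matrix.mul_apply,
      eq_comm, mul_comm]
  rw [← LinearMap.det_toMatrix b, hM]
  refine (Matrix.det_one_add_replicateCol_mul_replicateRow _ _).trans ?_
  conv_rhs => rw [← b.sum_repr w, map_sum]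
  simp [dotProduct, mul_comm]

theorem LinearMap.det_smul_id_add_smulRight {K M : Type*} [Field K] [AddCommGroup M] [Module K M]
    [FiniteDimensional K M] {a : K} (ha : a ≠ 0) (f : Module.Dual K M) (w : M) :
    LinearMap.det (a • LinearMap.id + f.smulRight w) =
      a ^ Module.finrank K M * (1 + a⁻¹ * f w) := by
  have hfactor : a • LinearMap.id + f.smulRight w =
      a • (LinearMap.id + (a⁻¹ • f).smulRight w) := by
    ext x
    simp [smul_smul, ha]
  rw [hfactor, LinearMap.det_smul, LinearMap.det_id_add_smulRight]
  rfl

section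
variable {E : Type*} [NormedAddCommGroup E] [InnerProductSpace ℝ E]

theorem hasStrictFDerivAt_norm {x : E} (hx : x ≠ 0) :
    HasStrictFDerivAt (‖·‖) (innerSL ℝ (‖x‖⁻¹ • x)) x := by
  have h := (hasStrictFDerivAt_norm_sq x).sqrt (by positivity)
  simp only [Real.sqrt_sq (norm_nonneg _)] at h
  refine h.congr_fderiv ?_
  rw [map_smul, ← Nat.cast_smul_eq_nsmul ℝ, smul_smul, Nat.cast_ofNat]
  congr 1
  field_simp

theorem hasFDerivAt_smul_add_norm_sub_smul (a b : ℝ) {vs σ v : E} (hv : v ≠ vs) :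
    HasFDerivAt (fun w : E => a • w + b • (‖w - vs‖ • σ + vs))
      (a • ContinuousLinearMap.id ℝ E +
        b • (innerSL ℝ (‖v - vs‖⁻¹ • (v - vs))).smulRight σ) v := by
  have hnorm := (hasStrictFDerivAt_norm (sub_ne_zero.mpr hv)).hasFDerivAt.comp v
    ((hasFDerivAt_id v).sub_const vs)
  rw [ContinuousLinearMap.comp_id] at hnorm
  exact ((hasFDerivAt_id v).const_smul a).add (((hnorm.smul_const σ).add_const vs).const_smul b)

theorem det_fderiv_smul_add_norm_sub_smul [FiniteDimensional ℝ E] {a : ℝ} (ha : a ≠ 0) (b : ℝ)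
    {vs σ v : E} (hv : v ≠ vs) :
    LinearMap.det (fderiv ℝ (fun w : E => a • w + b • (‖w - vs‖ • σ + vs)) v).toLinearMap =
      a ^ Module.finrank ℝ E * (1 + a⁻¹ * b * inner ℝ (‖v - vs‖⁻¹ • (v - vs)) σ) := by
  rw [(hasFDerivAt_smul_add_norm_sub_smul a b hv).fderiv]
  convert LinearMap.det_smul_id_add_smulRight ha
    (b • innerSL ℝ (‖v - vs‖⁻¹ • (v - vs))).toLinearMap σ using 3
  · ext x
    simp [smul_smul, mul_assoc]
  · rw [mul_assoc]
    rfl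

end

theorem jacobian_z_map_general
    (vs σ : EuclideanSpace ℝ (Fin 3))
    (τ : ℝ) (hτ : τ ∈ Set.Icc (0:ℝ) 1)
    (v : EuclideanSpace ℝ (Fin 3)) (hne : v ≠ vs)
    (θ : ℝ) (hθ : θ ∈ Set.Icc (0:ℝ) π)
    (hcos : Real.cos θ = (inner ℝ (‖v - vs‖⁻¹ • (v - vs)) σ : ℝ)) :
    LinearMap.det ((fderiv ℝ
        (fun w : EuclideanSpace ℝ (Fin 3) =>
          ((1+τ)/2 : ℝ) • w + ((1-τ)/2 : ℝ) • (‖w - vs‖ • σ + vs)) v).toLinearMap)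
      = ((1+τ)^3/8) * |2*τ/(1+τ) + 2*((1-τ)/(1+τ)) * Real.cos (θ/2) ^ 2| ∧
    (θ ≤ π/2 → (1/8 : ℝ) ≤ LinearMap.det ((fderiv ℝ
        (fun w : EuclideanSpace ℝ (Fin 3) =>
          ((1+τ)/2 : ℝ) • w + ((1-τ)/2 : ℝ) • (‖w - vs‖ • σ + vs)) v).toLinearMap)) := by
  obtain ⟨hτ0, hτ1⟩ := hτ
  have hτ' : 1 + τ ≠ 0 := by positivity
  rw [det_fderiv_smul_add_norm_sub_smul (by positivity) _ hne, finrank_euclideanSpace_fin, ← hcos]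
  have hfactor : 2*τ/(1+τ) + 2*((1-τ)/(1+τ)) * cos (θ/2) ^ 2 =
      (1 + τ + (1-τ) * cos θ) / (1+τ) := by
    rw [cos_sq, mul_div_cancel₀ θ two_ne_zero]
    field_simp
    ring
  have hnonneg : 0 ≤ 1 + τ + (1-τ) * cos θ := by nlinarith [neg_one_le_cos θ]
  refine ⟨?_, fun hθ2 => ?_⟩
  · rw [hfactor, abs_of_nonneg (by positivity)]
    field_simp
    ring
  · have hcos0 : 0 ≤ cos θ := cos_nonneg_of_mem_Icc ⟨by linarith [hθ.1, pi_pos], hθ2⟩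
    field_simp
    nlinarith [mul_nonneg (mul_nonneg hcos0 (sub_nonneg.mpr hτ1)) (sq_nonneg (1+τ))]

/-- Jacobian of the map `v ↦ z = ((1+τ)/2)v + ((1−τ)/2)(|v−v_*|σ + v_*)`. -/
theorem jacobian_z_map
    (vs σ : EuclideanSpace ℝ (Fin 3)) (hσ : ‖σ‖ = 1)
    (τ : ℝ) (hτ : τ ∈ Set.Icc (0:ℝ) 1)
    (v : EuclideanSpace ℝ (Fin 3)) (hne : v ≠ vs)
    (θ : ℝ) (hθ : θ ∈ Set.Icc (0:ℝ) π)
    (hcos : Real.cos θ = (inner ℝ (‖v - vs‖⁻¹ • (v - vs)) σ : ℝ)) :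
    LinearMap.det ((fderiv ℝ
        (fun w : EuclideanSpace ℝ (Fin 3) =>
          ((1+τ)/2 : ℝ) • w + ((1-τ)/2 : ℝ) • (‖w - vs‖ • σ + vs)) v).toLinearMap)
      = ((1+τ)^3/8) * |2*τ/(1+τ) + 2*((1-τ)/(1+τ)) * Real.cos (θ/2) ^ 2| ∧
    (θ ≤ π/2 → (1/8 : ℝ) ≤ LinearMap.det ((fderiv ℝ
        (fun w : EuclideanSpace ℝ (Fin 3) =>
          ((1+τ)/2 : ℝ) • w + ((1-τ)/2 : ℝ) • (‖w - vs‖ • σ + vs)) v).toLinearMap)) :=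
  jacobian_z_map_general vs σ τ hτ v hne θ hθ hcos
end

section
/- For fixed v_* ∈ ℝ³, σ ∈ S² with deviation angle θ ∈ [0, π/2], and τ ∈ [0,1], the point z = ((1+τ)/2) v + ((1−τ)/2)(|v−v_*|σ + v_*) satisfies |z − v_*| = |v − v_*| · (τ² + (1−τ²) cos²(θ/2))^{1/2} ≥ |v − v_*|/√2. -/
open Real

/-
Put u = v − v_*. Then z − v_* = ((1+τ)/2) u + ((1−τ)/2) |u| σ, and since ⟨u, σ⟩ = |u| cos θ,
expanding the square gives |z − v_*|² = |u|² ((1+τ²)/2 + ((1−τ²)/2) cos θ), which the half-angle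
formula cos θ = 2 cos²(θ/2) − 1 turns into |u|² (τ² + (1−τ²) cos²(θ/2)). This factor equals
cos²(θ/2) + τ² sin²(θ/2) ≥ cos²(θ/2) = (1 + cos θ)/2 ≥ 1/2 because cos θ ≥ 0.
-/

section InnerProductSpace

variable {E : Type*} [NormedAddCommGroup E] [InnerProductSpace ℝ E]

lemma norm_mul_inner_inv_norm_smul (u σ : E) :
    ‖u‖ * inner ℝ (‖u‖⁻¹ • u) σ = inner ℝ u σ := by
  rcases eq_or_ne u 0 with rfl | hu
  · simp
  · rw [real_inner_smul_left, mul_inv_cancel_left₀ (norm_ne_zero_iff.mpr hu)]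

lemma norm_smul_add_smul_norm_smul_sq {u σ : E} (hσ : ‖σ‖ = 1) {c : ℝ}
    (hc : inner ℝ u σ = ‖u‖ * c) (a b : ℝ) :
    ‖a • u + b • (‖u‖ • σ)‖ ^ 2 = ‖u‖ ^ 2 * (a ^ 2 + b ^ 2 + 2 * a * b * c) := by
  rw [norm_add_sq_real, norm_smul, norm_smul, norm_smul, real_inner_smul_left,
    real_inner_smul_right, real_inner_smul_right, hc, hσ, norm_norm, Real.norm_eq_abs,
    Real.norm_eq_abs, mul_pow, mul_pow, sq_abs, sq_abs]
  ring

end InnerProductSpace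

lemma cos_half_sq (θ : ℝ) : cos (θ / 2) ^ 2 = (1 + cos θ) / 2 := by
  rw [cos_sq, mul_div_cancel₀ θ two_ne_zero]
  ring

lemma half_le_sq_add_one_sub_sq_mul_cos_half_sq (τ : ℝ) {θ : ℝ} (hθ : 0 ≤ cos θ) :
    1 / 2 ≤ τ ^ 2 + (1 - τ ^ 2) * cos (θ / 2) ^ 2 := by
  have hc : cos (θ / 2) ^ 2 ≤ 1 := cos_sq_le_one _
  rw [cos_half_sq] at hc ⊢
  nlinarith [mul_nonneg (sq_nonneg τ) (sub_nonneg.mpr hc)]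

lemma norm_eq_mul_sqrt_of_norm_sq_eq {F : Type*} [SeminormedAddCommGroup F] {w : F} {r x : ℝ}
    (hr : 0 ≤ r) (h : ‖w‖ ^ 2 = r ^ 2 * x) : ‖w‖ = r * √x := by
  rw [← sqrt_sq (norm_nonneg w), h, sqrt_mul (sq_nonneg r), sqrt_sq hr]

lemma div_sqrt_two_le_mul_sqrt {r x : ℝ} (hr : 0 ≤ r) (hx : 1 / 2 ≤ x) : r / √2 ≤ r * √x := by
  rw [div_eq_mul_inv, ← sqrt_inv, ← one_div]
  exact mul_le_mul_of_nonneg_left (sqrt_le_sqrt hx) hr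

theorem z_distance_formula_general
    (v vs σ : EuclideanSpace ℝ (Fin 3)) (hσ : ‖σ‖ = 1)
    (τ : ℝ)
    (θ : ℝ) (hθ : θ ∈ Set.Icc (0:ℝ) (π/2))
    (hcos : Real.cos θ = (inner ℝ (‖v - vs‖⁻¹ • (v - vs)) σ : ℝ))
    (z : EuclideanSpace ℝ (Fin 3))
    (hz : z = ((1+τ)/2 : ℝ) • v + ((1-τ)/2 : ℝ) • (‖v - vs‖ • σ + vs)) :
    ‖z - vs‖ = ‖v - vs‖ * Real.sqrt (τ^2 + (1 - τ^2) * Real.cos (θ/2) ^ 2) ∧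
    ‖v - vs‖ / Real.sqrt 2 ≤ ‖z - vs‖ := by
  have hinner : inner ℝ (v - vs) σ = ‖v - vs‖ * cos θ := by
    rw [hcos, norm_mul_inner_inv_norm_smul]
  have hzvs : z - vs = ((1 + τ) / 2) • (v - vs) + ((1 - τ) / 2) • (‖v - vs‖ • σ) := by
    rw [hz]; module
  have hsq : ‖z - vs‖ ^ 2 = ‖v - vs‖ ^ 2 * (τ ^ 2 + (1 - τ ^ 2) * cos (θ / 2) ^ 2) := by
    rw [hzvs, norm_smul_add_smul_norm_smul_sq hσ hinner, cos_half_sq]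
    ring
  have hnorm := norm_eq_mul_sqrt_of_norm_sq_eq (norm_nonneg _) hsq
  have hcos_nonneg : 0 ≤ cos θ := cos_nonneg_of_mem_Icc ⟨by linarith [hθ.1, pi_pos], hθ.2⟩
  exact ⟨hnorm, hnorm ▸ div_sqrt_two_le_mul_sqrt (norm_nonneg _)
    (half_le_sq_add_one_sub_sq_mul_cos_half_sq τ hcos_nonneg)⟩

/-- `|z − v_*| = |v − v_*| (τ² + (1−τ²)cos²(θ/2))^{1/2} ≥ |v − v_*|/√2`. -/
theorem z_distance_formula
    (v vs σ : EuclideanSpace ℝ (Fin 3)) (hσ : ‖σ‖ = 1) (hne : v ≠ vs)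
    (τ : ℝ) (hτ : τ ∈ Set.Icc (0:ℝ) 1)
    (θ : ℝ) (hθ : θ ∈ Set.Icc (0:ℝ) (π/2))
    (hcos : Real.cos θ = (inner ℝ (‖v - vs‖⁻¹ • (v - vs)) σ : ℝ))
    (z : EuclideanSpace ℝ (Fin 3))
    (hz : z = ((1+τ)/2 : ℝ) • v + ((1-τ)/2 : ℝ) • (‖v - vs‖ • σ + vs)) :
    ‖z - vs‖ = ‖v - vs‖ * Real.sqrt (τ^2 + (1 - τ^2) * Real.cos (θ/2) ^ 2) ∧
    ‖v - vs‖ / Real.sqrt 2 ≤ ‖z - vs‖ :=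
  z_distance_formula_general v vs σ hσ τ θ hθ hcos z hz
end
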